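/- Let 0 < a₁ ≤ a₂ and m ∈ M_{L²}(M,ω). Fix ψ₁ ∈ C_c^∞(B_4(0)) with 0 ≤ ψ₁ ≤ 1 and ψ₁ = 1 on B_2(0), and for R_n > 0 set ψ_{R_n}(x) := ψ₁(x/R_n) (so ψ_{R_n} ∈ C_c^∞(B_{4R_n}(0)), ψ_{R_n} ≥ 0, ψ_{R_n} = 1 on B_{2R_n}(0)) and m_{R_n} := m·χ_{B_{R_n}(0)}. Then there exist C₀ = C₀(a₁,a₂,ω,ψ₁) > 0 and R₀ = R₀(a₁,a₂,ω,ψ₁) > 0 such that for all a with a₁ ≤ a ≤ a₂ and all R_n ≥ R₀: ∫_{ℝ³} |∇ψ_{R_n}|² − D_a(m_{R_n}, ψ_{R_n}²) ≤ − C₀ R_n³. -/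

import Mathlib

open MeasureTheory Metric Real Filter Topology ENNReal
open scoped RealInnerProductSpace

noncomputable section

abbrev E3 : Type := EuclideanSpace ℝ (Fin 3)

/-- Laplacian via second derivatives along coordinate directions. -/
def lap (f : E3 → ℝ) (x : E3) : ℝ :=
  ∑ i : Fin 3,
    iteratedFDeriv ℝ 2 f x ![EuclideanSpace.single i (1:ℝ), EuclideanSpace.single i (1:ℝ)]

/-- Smooth compactly supported test functions. -/
def IsTest (ψ : E3 → ℝ) : Prop := ContDiff ℝ (⊤ : ℕ∞) ψ ∧ HasCompactSupport ψ

/-- Uniform Sobolev norm `H^k_unif`, `ℝ≥0∞`-valued. -/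
def HUnifNorm (k : ℕ) (f : E3 → ℝ) : ℝ≥0∞ :=
  ∑ j ∈ Finset.range (k + 1), ⨆ x : E3,
    eLpNorm (fun y => ‖iteratedFDeriv ℝ j f y‖) 2 (volume.restrict (ball x 1))

/-- The class `M_{H^k}(M, (ω₀,ω₁))` of nuclear distributions. -/
def MemM (k : ℕ) (M ω₀ ω₁ : ℝ) (m : E3 → ℝ) : Prop :=
  (∀ x, 0 ≤ m x) ∧ HUnifNorm k m ≤ ENNReal.ofReal M ∧
    ∀ R > (0:ℝ), ∀ x : E3, ω₀ * R ^ 3 - ω₁ ≤ ∫ z in ball x R, m z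

/-- The TFW Yukawa equations, in the sense of distributions. -/
def YukEqs (a : ℝ) (m u φ : E3 → ℝ) : Prop :=
  (∀ ψ, IsTest ψ →
    ∫ x, u x * lap ψ x = ∫ x, ((5/3) * u x ^ ((7:ℝ)/3) - φ x * u x) * ψ x) ∧
  (∀ ψ, IsTest ψ →
    ∫ x, (a ^ 2 * φ x * ψ x - φ x * lap ψ x) = ∫ x, 4 * π * (m x - u x ^ 2) * ψ x)

/-- The TFW Coulomb equations, in the sense of distributions. -/
def CoulombEqs (m u φ : E3 → ℝ) : Prop :=
  (∀ ψ, IsTest ψ →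
    ∫ x, u x * lap ψ x = ∫ x, ((5/3) * u x ^ ((7:ℝ)/3) - φ x * u x) * ψ x) ∧
  (∀ ψ, IsTest ψ →
    ∫ x, (- φ x * lap ψ x) = ∫ x, 4 * π * (m x - u x ^ 2) * ψ x)

def YukawaSol (a : ℝ) (m u φ : E3 → ℝ) : Prop :=
  HUnifNorm 4 u < ⊤ ∧ HUnifNorm 2 φ < ⊤ ∧ YukEqs a m u φ

def CoulombSol (m u φ : E3 → ℝ) : Prop :=
  HUnifNorm 4 u < ⊤ ∧ HUnifNorm 2 φ < ⊤ ∧ CoulombEqs m u φ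

def YukawaGS (a : ℝ) (m u φ : E3 → ℝ) : Prop := YukawaSol a m u φ ∧ ∀ x, 0 ≤ u x

def CoulombGS (m u φ : E3 → ℝ) : Prop := CoulombSol m u φ ∧ ∀ x, 0 ≤ u x

/-- Sum of the norms of all partial derivatives of order ≤ k at a point. -/
def DSum (k : ℕ) (f : E3 → ℝ) (x : E3) : ℝ :=
  ∑ j ∈ Finset.range (k + 1), ‖iteratedFDeriv ℝ j f x‖

/-- Sum of the squared norms of all partial derivatives of order ≤ k at a point. -/
def DSumSq (k : ℕ) (f : E3 → ℝ) (x : E3) : ℝ :=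
  ∑ j ∈ Finset.range (k + 1), ‖iteratedFDeriv ℝ j f x‖ ^ 2

/-- The class `H_γ` of test functions. -/
def MemHgamma (γ : ℝ) (ξ : E3 → ℝ) : Prop :=
  MemLp ξ 2 volume ∧ MemLp (fun x => ‖fderiv ℝ ξ x‖) 2 volume ∧
    ∀ᵐ x ∂volume, ‖fderiv ℝ ξ x‖ ≤ γ * |ξ x|

/-- Membership in the Sobolev space `H^k(ℝ³)`. -/
def MemHk (k : ℕ) (f : E3 → ℝ) : Prop :=
  ∀ j ∈ Finset.range (k + 1), MemLp (fun x => ‖iteratedFDeriv ℝ j f x‖) 2 volume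

/-- (An equivalent version of) the `H^k(ℝ³)` norm. -/
def HkNorm (k : ℕ) (f : E3 → ℝ) : ℝ :=
  ∑ j ∈ Finset.range (k + 1),
    (eLpNorm (fun x => ‖iteratedFDeriv ℝ j f x‖) 2 volume).toReal

/-- The Yukawa interaction `D_a(f,g)`. -/
def Da (a : ℝ) (f g : E3 → ℝ) : ℝ :=
  ∫ x, ∫ y, f x * (Real.exp (-a * ‖x - y‖) / ‖x - y‖) * g y

/-- Convolution with the Yukawa potential `Y_a`. -/
def Yconv (a : ℝ) (f : E3 → ℝ) (x : E3) : ℝ :=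
  ∫ y, f y * (Real.exp (-a * ‖x - y‖) / ‖x - y‖)

/-- The TFW Yukawa energy functional. -/
def Etfw (a : ℝ) (v m : E3 → ℝ) : ℝ :=
  (∫ x, ‖fderiv ℝ v x‖ ^ 2) + (∫ x, v x ^ ((10:ℝ)/3))
    + (1/2) * Da a (fun x => m x - v x ^ 2) (fun x => m x - v x ^ 2)

/-- The admissible class for the TFW Yukawa minimisation problem. -/
def Adm (v : E3 → ℝ) : Prop :=
  (∀ x, 0 ≤ v x) ∧ MemLp (fun x => ‖fderiv ℝ v x‖) 2 volume
    ∧ MemLp v (ENNReal.ofReal (10/3)) volume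

/-- `u` is a minimiser of the TFW Yukawa minimisation problem `I^TFW_a(m)`. -/
def IsMinimiser (a : ℝ) (m u : E3 → ℝ) : Prop :=
  Adm u ∧ ∀ v, Adm v → Etfw a u m ≤ Etfw a v m

/-- `u` is the (a.e.-)unique minimiser of `I^TFW_a(m)`. -/
def UniqueMin (a : ℝ) (m u : E3 → ℝ) : Prop :=
  IsMinimiser a m u ∧ ∀ v, IsMinimiser a m v → v =ᵐ[volume] u

/-! The rescaled cutoff `ψ_R = ψ₁(·/R)` has gradient of size `‖∇ψ₁‖_∞ / R` on `B_{4R}`, so the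
kinetic term is `O(R)`. For the interaction, `D_a(m_R, ψ_R²) = ∫ m_R · (Y_a ∗ ψ_R²)`; for `x ∈ B_R`
the unit ball `B_1(x)` lies in `B_{2R}`, where `ψ_R² = 1`, and `Y_a ≥ e^{-a}` on it, so
`Y_a ∗ ψ_R² ≥ e^{-a₂}|B_1|` on `B_R` and the interaction is at least `e^{-a₂}|B_1|(ω₀R³ - ω₁)`.
The cubic term wins for large `R`. The Yukawa potential is integrable (polar coordinates), so all
these integrals are finite. -/

theorem integrable_exp_neg_mul_norm_div_norm {E : Type*} [NormedAddCommGroup E]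
    [NormedSpace ℝ E] [FiniteDimensional ℝ E] [MeasurableSpace E] [BorelSpace E]
    (μ : Measure E) [μ.IsAddHaarMeasure] (hE : 2 ≤ Module.finrank ℝ E) {a : ℝ} (ha : 0 < a) :
    Integrable (fun z : E => exp (-a * ‖z‖) / ‖z‖) μ := by
  obtain ⟨d, hd⟩ := Nat.exists_eq_add_of_le hE
  have : Nontrivial E := Module.nontrivial_of_finrank_pos (R := ℝ) (by omega)
  rw [integrable_fun_norm_addHaar μ (f := fun r => exp (-a * r) / r), hd,
    show 2 + d - 1 = d + 1 by omega]
  refine (integrableOn_rpow_mul_exp_neg_mul_rpow (s := d) (by linarith [d.cast_nonneg (α := ℝ)])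
    one_pos ha).congr_fun (fun r (hr : 0 < r) => ?_) measurableSet_Ioi
  dsimp only
  rw [Real.rpow_natCast, Real.rpow_one, smul_eq_mul, pow_succ]
  field_simp

theorem integral_norm_fderiv_comp_inv_smul_sq_le {E : Type*} [NormedAddCommGroup E]
    [NormedSpace ℝ E] [FiniteDimensional ℝ E] [MeasurableSpace E] [BorelSpace E]
    (μ : Measure E) [μ.IsAddHaarMeasure] {ψ : E → ℝ} {r L R : ℝ} (hr : 0 ≤ r) (hR : 0 < R)
    (hsupp : tsupport ψ ⊆ closedBall 0 r) (hL : ∀ y, ‖fderiv ℝ ψ y‖ ≤ L) :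
    ∫ x, ‖fderiv ℝ (fun y => ψ (R⁻¹ • y)) x‖ ^ 2 ∂μ
      ≤ (L / R) ^ 2 * ((r * R) ^ Module.finrank ℝ E * μ.real (ball 0 1)) := by
  have hpt : ∀ x, ‖fderiv ℝ (fun y => ψ (R⁻¹ • y)) x‖ ^ 2
      ≤ (closedBall (0 : E) (r * R)).indicator (fun _ => (L / R) ^ 2) x := by
    intro x
    rw [fderiv_comp_smul, norm_smul, norm_inv, Real.norm_of_nonneg hR.le]
    by_cases hx : x ∈ closedBall (0 : E) (r * R)
    · rw [Set.indicator_of_mem hx, div_eq_inv_mul]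
      gcongr
      exact hL _
    · have hx' : R⁻¹ • x ∉ tsupport ψ := fun h => hx <| by
        have := hsupp h
        rw [mem_closedBall_zero_iff, norm_smul, norm_inv, Real.norm_of_nonneg hR.le,
          inv_mul_le_iff₀ hR] at this
        rwa [mem_closedBall_zero_iff, mul_comm]
      simp [Set.indicator_of_notMem hx, fderiv_of_notMem_tsupport ℝ hx']
  calc ∫ x, ‖fderiv ℝ (fun y => ψ (R⁻¹ • y)) x‖ ^ 2 ∂μ
      ≤ ∫ x, (closedBall (0 : E) (r * R)).indicator (fun _ => (L / R) ^ 2) x ∂μ :=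
        integral_mono_of_nonneg (.of_forall fun _ => by positivity)
          ((integrable_indicator_iff measurableSet_closedBall).2
            (integrableOn_const measure_closedBall_lt_top.ne)) (.of_forall hpt)
    _ = _ := by
      rw [integral_indicator_const _ measurableSet_closedBall,
        Measure.addHaar_real_closedBall μ 0 (by positivity), smul_eq_mul, mul_comm]

theorem Da_eq_integral_mul_Yconv (a : ℝ) (f g : E3 → ℝ) :
    Da a f g = ∫ x, f x * Yconv a g x := by
  simp only [Da, Yconv, ← integral_const_mul, mul_comm, mul_left_comm]

theorem integrable_mul_yukawa_sub {a C : ℝ} (ha : 0 < a) {g : E3 → ℝ}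
    (hg : AEStronglyMeasurable g) (hgC : ∀ y, ‖g y‖ ≤ C) (x : E3) :
    Integrable (fun y => g y * (exp (-a * ‖x - y‖) / ‖x - y‖)) :=
  ((integrable_exp_neg_mul_norm_div_norm volume (by simp) ha).comp_sub_left x).bdd_mul hg
    (.of_forall hgC)

theorem Yconv_nonneg (a : ℝ) {g : E3 → ℝ} (hg0 : 0 ≤ g) (x : E3) : 0 ≤ Yconv a g x :=
  integral_nonneg fun _ => mul_nonneg (hg0 _) (div_nonneg (exp_nonneg _) (norm_nonneg _))

theorem stronglyMeasurable_Yconv (a : ℝ) {g : E3 → ℝ} (hg : Measurable g) :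
    StronglyMeasurable (Yconv a g) :=
  (show Measurable fun p : E3 × E3 => g p.2 * (exp (-a * ‖p.1 - p.2‖) / ‖p.1 - p.2‖) by
    fun_prop).stronglyMeasurable.integral_prod_right'

theorem Yconv_le_integral {a b : ℝ} (hb : 0 < b) (hba : b ≤ a) {g : E3 → ℝ}
    (hg : AEStronglyMeasurable g) (hg0 : 0 ≤ g) (hg1 : g ≤ 1) (x : E3) :
    Yconv a g x ≤ ∫ z : E3, exp (-b * ‖z‖) / ‖z‖ := by
  rw [← integral_sub_left_eq_self _ volume x]
  refine integral_mono (integrable_mul_yukawa_sub (hb.trans_le hba) hg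
    (fun y => (abs_of_nonneg (hg0 y)).trans_le (hg1 y)) x)
    ((integrable_exp_neg_mul_norm_div_norm volume (by simp) hb).comp_sub_left x) fun y => ?_
  calc g y * (exp (-a * ‖x - y‖) / ‖x - y‖) ≤ 1 * (exp (-a * ‖x - y‖) / ‖x - y‖) := by
        gcongr
        exact hg1 y
    _ ≤ exp (-b * ‖x - y‖) / ‖x - y‖ := by
        rw [one_mul]
        gcongr

theorem exp_neg_mul_measureReal_ball_le_Yconv {a : ℝ} (ha : 0 < a) {g : E3 → ℝ}
    (hg : AEStronglyMeasurable g) (hg0 : 0 ≤ g) (hg1 : g ≤ 1) {x : E3}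
    (hg_one : ∀ y ∈ ball x 1, g y = 1) :
    exp (-a) * volume.real (ball x 1) ≤ Yconv a g x := by
  have hint := integrable_mul_yukawa_sub ha hg
    (fun y => (abs_of_nonneg (hg0 y)).trans_le (hg1 y)) x
  have hK : ∀ y ∈ ball x 1 \ {x}, exp (-a) ≤ g y * (exp (-a * ‖x - y‖) / ‖x - y‖) := by
    rintro y ⟨hy, hyx⟩
    have hd : 0 < ‖x - y‖ := norm_pos_iff.2 (sub_ne_zero.2 (Ne.symm hyx))
    have hd1 : ‖x - y‖ < 1 := by rwa [norm_sub_rev, ← dist_eq_norm]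
    rw [hg_one y hy, one_mul]
    calc exp (-a) ≤ exp (-a * ‖x - y‖) := exp_le_exp.2 (by nlinarith)
      _ ≤ exp (-a * ‖x - y‖) / ‖x - y‖ := le_div_self (exp_nonneg _) hd hd1.le
  -- the centre is removed since `‖x - x‖⁻¹ = 0` makes the kernel vanish there
  calc exp (-a) * volume.real (ball x 1) = exp (-a) * volume.real (ball x 1 \ {x}) := by
        rw [measureReal_sdiff_null (by simp [Measure.real, measure_singleton])
          (by simp [measure_singleton])]
    _ ≤ ∫ y in ball x 1 \ {x}, g y * (exp (-a * ‖x - y‖) / ‖x - y‖) :=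
        setIntegral_ge_of_const_le_real (measurableSet_ball.diff (measurableSet_singleton x))
          (measure_ne_top_of_subset Set.sdiff_subset measure_ball_lt_top.ne) hK hint.integrableOn
    _ ≤ Yconv a g x := setIntegral_le_integral hint (.of_forall fun y =>
        mul_nonneg (hg0 y) (div_nonneg (exp_nonneg _) (norm_nonneg _)))

theorem exp_neg_mul_setIntegral_le_Da {a R : ℝ} (ha : 0 < a) {m g : E3 → ℝ} (hm0 : 0 ≤ m)
    (hm : IntegrableOn m (ball 0 R)) (hg : Measurable g) (hg0 : 0 ≤ g) (hg1 : g ≤ 1)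
    (hg_one : ∀ y ∈ ball (0 : E3) (R + 1), g y = 1) :
    exp (-a) * volume.real (ball (0 : E3) 1) * ∫ z in ball 0 R, m z
      ≤ Da a ((ball (0 : E3) R).indicator m) g := by
  set f := (ball (0 : E3) R).indicator m
  have hf : Integrable f := (integrable_indicator_iff measurableSet_ball).2 hm
  have hYbound : ∀ x, ‖Yconv a g x‖ ≤ ∫ z : E3, exp (-a * ‖z‖) / ‖z‖ := fun x => by
    rw [Real.norm_of_nonneg (Yconv_nonneg a hg0 x)]
    exact Yconv_le_integral ha le_rfl hg.aestronglyMeasurable hg0 hg1 x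
  rw [Da_eq_integral_mul_Yconv, ← integral_indicator measurableSet_ball, ← integral_const_mul]
  refine integral_mono (hf.const_mul _) (hf.mul_bdd
    (stronglyMeasurable_Yconv a hg).aestronglyMeasurable (.of_forall hYbound)) fun x => ?_
  by_cases hx : x ∈ ball (0 : E3) R
  · have hball : ∀ y ∈ ball x 1, g y = 1 := fun y hy => hg_one y <| by
      rw [mem_ball_zero_iff] at hx ⊢
      rw [mem_ball_iff_norm] at hy
      linarith [norm_le_norm_add_norm_sub' y x]
    have := exp_neg_mul_measureReal_ball_le_Yconv ha hg.aestronglyMeasurable hg0 hg1 hball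
    rw [Measure.addHaar_real_ball_center] at this
    simp only [f, Set.indicator_of_mem hx]
    rw [mul_comm (m x)]
    exact mul_le_mul_of_nonneg_right this (hm0 x)
  · simp [f, Set.indicator_of_notMem hx]

theorem add_le_half_mul_cube {A B c R : ℝ} (hA : 0 ≤ A) (hB : 0 ≤ B) (hc : 0 < c)
    (hR : 1 + 4 * A / c + 4 * B / c ≤ R) : A * R + B ≤ c / 2 * R ^ 3 := by
  have hAc : 0 ≤ 4 * A / c := by positivity
  have hBc : 0 ≤ 4 * B / c := by positivity
  have hR1 : 1 ≤ R := by linarith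
  have hAR : A ≤ c / 4 * R := by
    have := (div_le_iff₀ hc).1 (show 4 * A / c ≤ R by linarith)
    linarith
  have hBR : B ≤ c / 4 * R := by
    have := (div_le_iff₀ hc).1 (show 4 * B / c ≤ R by linarith)
    linarith
  have hR3 : R ^ 2 ≤ R ^ 3 := pow_le_pow_right₀ hR1 (by norm_num)
  have hR13 : R ≤ R ^ 3 := le_self_pow₀ hR1 (by norm_num)
  calc A * R + B ≤ c / 4 * R * R + c / 4 * R := by gcongr
    _ = c / 4 * R ^ 2 + c / 4 * R := by ring
    _ ≤ c / 4 * R ^ 3 + c / 4 * R ^ 3 := by gcongr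
    _ = c / 2 * R ^ 3 := by ring

theorem cutoff_energy_le {ψ : E3 → ℝ} {L a b R M : ℝ} (hψ : Continuous ψ)
    (hsupp : tsupport ψ ⊆ closedBall 0 4) (hL : ∀ y, ‖fderiv ℝ ψ y‖ ≤ L)
    (hψ0 : ∀ x, 0 ≤ ψ x) (hψ1 : ∀ x, ψ x ≤ 1) (hone : ∀ x ∈ ball (0 : E3) 2, ψ x = 1)
    (ha : 0 < a) (hab : a ≤ b) (hR : 1 ≤ R) {m : E3 → ℝ} (hm0 : 0 ≤ m) (hM : 0 < M)
    (hmass : M ≤ ∫ z in ball 0 R, m z) :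
    (∫ x, ‖fderiv ℝ (fun y : E3 => ψ (R⁻¹ • y)) x‖ ^ 2)
        - Da a ((ball (0 : E3) R).indicator m) (fun x => ψ (R⁻¹ • x) ^ 2)
      ≤ 4 ^ 3 * L ^ 2 * volume.real (ball (0 : E3) 1) * R
        - exp (-b) * volume.real (ball (0 : E3) 1) * M := by
  have hR0 : 0 < R := by linarith
  have hgrad : ∫ x, ‖fderiv ℝ (fun y : E3 => ψ (R⁻¹ • y)) x‖ ^ 2
      ≤ 4 ^ 3 * L ^ 2 * volume.real (ball (0 : E3) 1) * R :=
    (integral_norm_fderiv_comp_inv_smul_sq_le volume (by norm_num) hR0 hsupp hL).trans_eq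
      (by rw [finrank_euclideanSpace_fin]; field_simp)
  have hψR_one : ∀ y ∈ ball (0 : E3) (R + 1), ψ (R⁻¹ • y) ^ 2 = 1 := fun y hy => by
    rw [hone _ ?_, one_pow]
    rw [mem_ball_zero_iff] at hy ⊢
    rw [norm_smul, norm_inv, Real.norm_of_nonneg hR0.le, inv_mul_lt_iff₀ hR0]
    linarith
  have hDa := exp_neg_mul_setIntegral_le_Da (g := fun x => ψ (R⁻¹ • x) ^ 2) ha hm0
    (Integrable.of_integral_ne_zero (hM.trans_le hmass).ne')
    ((hψ.comp (continuous_const_smul R⁻¹)).pow 2).measurable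
    (fun x => sq_nonneg _) (fun x => pow_le_one₀ (hψ0 _) (hψ1 _)) hψR_one
  have hmass' : exp (-b) * volume.real (ball (0 : E3) 1) * M
      ≤ exp (-a) * volume.real (ball (0 : E3) 1) * ∫ z in ball 0 R, m z := by
    gcongr
  linarith

theorem technical_lemma_general
    (a₁ a₂ ω₀ ω₁ : ℝ) (ha₁ : 0 < a₁) (hω₀ : 0 < ω₀) (hω₁ : 0 < ω₁)
    (ψ₁ : E3 → ℝ) (hψsm : ContDiff ℝ (⊤ : ℕ∞) ψ₁) (hψsupp : tsupport ψ₁ ⊆ ball 0 4)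
    (hψ0 : ∀ x, 0 ≤ ψ₁ x) (hψle : ∀ x, ψ₁ x ≤ 1)
    (hψone : ∀ x ∈ ball (0:E3) 2, ψ₁ x = 1) :
    ∃ C₀ > (0:ℝ), ∃ R₀ > (0:ℝ), ∀ M > (0:ℝ), ∀ m : E3 → ℝ, MemM 0 M ω₀ ω₁ m →
      ∀ a : ℝ, a₁ ≤ a → a ≤ a₂ → ∀ Rn : ℝ, R₀ ≤ Rn →
      (∫ x, ‖fderiv ℝ (fun y : E3 => ψ₁ (Rn⁻¹ • y)) x‖ ^ 2)
          - Da a ((ball (0:E3) Rn).indicator m) (fun x => ψ₁ (Rn⁻¹ • x) ^ 2)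
        ≤ -C₀ * Rn ^ 3 := by
  have hsupp : tsupport ψ₁ ⊆ closedBall 0 4 := hψsupp.trans ball_subset_closedBall
  have hψc : HasCompactSupport ψ₁ :=
    (isCompact_closedBall 0 4).of_isClosed_subset (isClosed_tsupport ψ₁) hsupp
  obtain ⟨L, hL⟩ := (hψc.fderiv ℝ).exists_bound_of_continuous (hψsm.continuous_fderiv (by simp))
  set v := volume.real (ball (0 : E3) 1)
  have hv : 0 < v := ENNReal.toReal_pos (measure_ball_pos volume 0 one_pos).ne'
    measure_ball_lt_top.ne
  set A := 4 ^ 3 * L ^ 2 * v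
  set c := exp (-a₂) * v
  refine ⟨c * ω₀ / 2, by positivity, 1 + 4 * A / (c * ω₀) + 4 * (c * ω₁) / (c * ω₀),
    by positivity, fun _ _ m ⟨hm0, _, hmass⟩ a ha₁a haa₂ R hR => ?_⟩
  have hbalance := add_le_half_mul_cube (by positivity) (by positivity) (by positivity) hR
  have hR1 : 1 ≤ R := by
    have : 0 ≤ 4 * A / (c * ω₀) := by positivity
    have : 0 ≤ 4 * (c * ω₁) / (c * ω₀) := by positivity
    linarith
  have hmass_pos : 0 < ω₀ * R ^ 3 - ω₁ := by
    refine (mul_pos_iff_of_pos_left (by positivity : 0 < c)).1 ?_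
    nlinarith [mul_pos (by positivity : 0 < c) hω₁,
      mul_nonneg (by positivity : 0 ≤ A) (by linarith : (0 : ℝ) ≤ R)]
  calc _ ≤ A * R - c * (ω₀ * R ^ 3 - ω₁) := by
        have := cutoff_energy_le hψsm.continuous hsupp hL hψ0 hψle hψone (ha₁.trans_le ha₁a)
          haa₂ hR1 (fun x => hm0 x) hmass_pos (hmass R (by linarith) 0)
        linarith
    _ ≤ -(c * ω₀ / 2) * R ^ 3 := by linarith

/-- **Lemma (energy lowering of large-scale test functions, uniformly in `a ∈ [a₁,a₂]`).** -/
theorem technical_lemma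
    (a₁ a₂ ω₀ ω₁ : ℝ) (ha₁ : 0 < a₁) (ha₁₂ : a₁ ≤ a₂) (hω₀ : 0 < ω₀) (hω₁ : 0 < ω₁)
    (ψ₁ : E3 → ℝ) (hψsm : ContDiff ℝ (⊤ : ℕ∞) ψ₁) (hψsupp : tsupport ψ₁ ⊆ ball 0 4)
    (hψ0 : ∀ x, 0 ≤ ψ₁ x) (hψle : ∀ x, ψ₁ x ≤ 1)
    (hψone : ∀ x ∈ ball (0:E3) 2, ψ₁ x = 1) :
    ∃ C₀ > (0:ℝ), ∃ R₀ > (0:ℝ), ∀ M > (0:ℝ), ∀ m : E3 → ℝ, MemM 0 M ω₀ ω₁ m →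
      ∀ a : ℝ, a₁ ≤ a → a ≤ a₂ → ∀ Rn : ℝ, R₀ ≤ Rn →
      (∫ x, ‖fderiv ℝ (fun y : E3 => ψ₁ (Rn⁻¹ • y)) x‖ ^ 2)
          - Da a ((ball (0:E3) Rn).indicator m) (fun x => ψ₁ (Rn⁻¹ • x) ^ 2)
        ≤ -C₀ * Rn ^ 3 :=
  technical_lemma_general a₁ a₂ ω₀ ω₁ ha₁ hω₀ hω₁ ψ₁ hψsm hψsupp hψ0 hψle hψone
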